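/- For 2 < p < ∞ and any u > 0, ∫_ℝ exp(-β_p^p·u^{p/2}|x|^p - πx²) dx > (1+u)^{-1/2}, where β_p = 2Γ(1+1/p). -/

import Mathlib

open MeasureTheory Real Set Function

/-!
With `c = β_p ^ p * u ^ (p / 2)` the density `exp (-c |x| ^ p)` has the same mass `u ^ (-1/2)` as
the Gaussian `exp (-π u x²)`, whose integral against the weight `exp (-π x²)` is exactly
`(1 + u) ^ (-1/2)`. Since `p > 2`, the first density minus the second is nonnegative for `|x| ≤ r`
and nonpositive for `|x| ≥ r`, where `c r ^ (p - 2) = π u`. The weight decreases in `|x|`, so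
subtracting its value at `r` from it (harmless, as the masses agree) leaves an integrand of constant
sign, strictly positive at `x = r / 2`.
-/

theorem integral_mul_lt_integral_mul_of_sub_mul_sub_nonneg {α : Type*} [MeasurableSpace α]
    {μ : Measure α} {f g w : α → ℝ} (k : ℝ) (hf : Integrable f μ) (hg : Integrable g μ)
    (hfw : Integrable (fun x ↦ f x * w x) μ) (hgw : Integrable (fun x ↦ g x * w x) μ)
    (heq : ∫ x, f x ∂μ = ∫ x, g x ∂μ) (hnonneg : ∀ x, 0 ≤ (f x - g x) * (w x - k))
    (hpos : 0 < μ (support fun x ↦ (f x - g x) * (w x - k))) :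
    ∫ x, g x * w x ∂μ < ∫ x, f x * w x ∂μ := by
  have hdiff : Integrable (fun x ↦ (f x - g x) * k) μ := (hf.sub hg).mul_const k
  have hfgw : Integrable (fun x ↦ f x * w x - g x * w x) μ := hfw.sub hgw
  have hsplit : (fun x ↦ (f x - g x) * (w x - k))
      = fun x ↦ (f x * w x - g x * w x) - (f x - g x) * k := by
    funext x; ring
  have hintegral :
      ∫ x, (f x - g x) * (w x - k) ∂μ = ∫ x, f x * w x ∂μ - ∫ x, g x * w x ∂μ := by
    rw [hsplit, integral_sub hfgw hdiff, integral_sub hfw hgw, integral_mul_const,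
      integral_sub hf hg, heq, sub_self, zero_mul, sub_zero]
  have : 0 < ∫ x, (f x - g x) * (w x - k) ∂μ := by
    rw [integral_pos_iff_support_of_nonneg hnonneg (by rw [hsplit]; exact hfgw.sub hdiff)]
    exact hpos
  linarith

lemma integrable_exp_neg_mul_abs_rpow {b p : ℝ} (hb : 0 < b) (hp : 0 < p) :
    Integrable fun x : ℝ ↦ exp (-b * |x| ^ p) := by
  have h := (integrable_fun_norm_addHaar (volume : Measure ℝ)
    (f := fun y ↦ exp (-b * y ^ p))).2 ?_
  · simpa only [Real.norm_eq_abs] using h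
  · simpa [Module.finrank_self] using
      integrableOn_rpow_mul_exp_neg_mul_rpow neg_one_lt_zero hp hb

lemma integral_exp_neg_mul_abs_rpow {b p : ℝ} (hb : 0 < b) (hp : 0 < p) :
    ∫ x : ℝ, exp (-b * |x| ^ p) = 2 * Gamma (1 / p + 1) * b ^ (-1 / p) := by
  rw [integral_comp_abs (f := fun y ↦ exp (-b * y ^ p)), integral_exp_neg_mul_rpow hp hb]
  ring

lemma integral_exp_neg_mul_sq_mul_exp_neg_mul_sq (a b : ℝ) :
    ∫ x : ℝ, exp (-b * x ^ 2) * exp (-a * x ^ 2) = √(π / (a + b)) := by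
  simp_rw [← exp_add, ← add_mul, ← neg_add, add_comm b a]
  exact integral_gaussian (a + b)

lemma abs_rpow_eq_abs_rpow_sub_two_mul_sq {p : ℝ} (hp : 0 < p) (x : ℝ) :
    |x| ^ p = |x| ^ (p - 2) * x ^ 2 := by
  rw [← sq_abs, ← rpow_natCast, ← rpow_add' (abs_nonneg x) (by norm_num; linarith)]
  norm_num

lemma abs_rpow_le_rpow_mul_sq {p r x : ℝ} (hp : 2 ≤ p) (hx : |x| ≤ r) :
    |x| ^ p ≤ r ^ (p - 2) * x ^ 2 := by
  rw [abs_rpow_eq_abs_rpow_sub_two_mul_sq (by linarith)]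
  gcongr

lemma rpow_mul_sq_le_abs_rpow {p r x : ℝ} (hp : 2 ≤ p) (hr : 0 ≤ r) (hx : r ≤ |x|) :
    r ^ (p - 2) * x ^ 2 ≤ |x| ^ p := by
  rw [abs_rpow_eq_abs_rpow_sub_two_mul_sq (by linarith)]
  gcongr

lemma abs_rpow_lt_rpow_mul_sq {p r x : ℝ} (hp : 2 < p) (hx₀ : x ≠ 0) (hx : |x| < r) :
    |x| ^ p < r ^ (p - 2) * x ^ 2 := by
  rw [abs_rpow_eq_abs_rpow_sub_two_mul_sq (by linarith)]
  gcongr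

lemma norm_exp_neg_mul_le_one {b t : ℝ} (hb : 0 ≤ b) (ht : 0 ≤ t) :
    ‖exp (-b * t)‖ ≤ 1 := by
  rw [norm_of_nonneg (exp_nonneg _), exp_le_one_iff]
  nlinarith

theorem integral_exp_neg_mul_sq_mul_lt_of_integral_eq {a b c p : ℝ} (ha : 0 < a) (hb : 0 < b)
    (hc : 0 < c) (hp : 2 < p)
    (heq : ∫ x : ℝ, exp (-c * |x| ^ p) = ∫ x : ℝ, exp (-b * x ^ 2)) :
    ∫ x : ℝ, exp (-b * x ^ 2) * exp (-a * x ^ 2) <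
      ∫ x : ℝ, exp (-c * |x| ^ p) * exp (-a * x ^ 2) := by
  set r := (b / c) ^ (p - 2)⁻¹
  have hr : 0 < r := by positivity
  have hbr : b = c * r ^ (p - 2) := by
    rw [rpow_inv_rpow (by positivity) (by linarith)]
    field_simp
  have hf := integrable_exp_neg_mul_abs_rpow (p := p) hc (by linarith)
  have hg := integrable_exp_neg_mul_sq hb
  have hw_cont : Continuous fun x : ℝ ↦ exp (-a * x ^ 2) := by fun_prop
  have hw_le : ∀ᵐ x : ℝ, ‖exp (-a * x ^ 2)‖ ≤ 1 :=
    .of_forall fun x ↦ norm_exp_neg_mul_le_one ha.le (sq_nonneg x)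
  have hsign : ∀ x : ℝ,
      0 ≤ (exp (-c * |x| ^ p) - exp (-b * x ^ 2)) * (exp (-a * x ^ 2) - exp (-a * r ^ 2)) := by
    intro x
    rcases le_total |x| r with hx | hx
    · have hxr : x ^ 2 ≤ r ^ 2 := sq_abs x ▸ pow_le_pow_left₀ (abs_nonneg x) hx 2
      have := mul_le_mul_of_nonneg_left (abs_rpow_le_rpow_mul_sq hp.le hx) hc.le
      refine mul_nonneg (sub_nonneg.2 (exp_le_exp.2 ?_)) (sub_nonneg.2 (exp_le_exp.2 ?_))
      · rw [hbr]; linarith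
      · nlinarith
    · have hxr : r ^ 2 ≤ x ^ 2 := sq_abs x ▸ pow_le_pow_left₀ hr.le hx 2
      have := mul_le_mul_of_nonneg_left (rpow_mul_sq_le_abs_rpow hp.le hr.le hx) hc.le
      refine mul_nonneg_of_nonpos_of_nonpos (sub_nonpos.2 (exp_le_exp.2 ?_))
        (sub_nonpos.2 (exp_le_exp.2 ?_))
      · rw [hbr]; linarith
      · nlinarith
  have hsupport : 0 < volume (support fun x : ℝ ↦
      (exp (-c * |x| ^ p) - exp (-b * x ^ 2)) * (exp (-a * x ^ 2) - exp (-a * r ^ 2))) := by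
    have hcont : Continuous fun x : ℝ ↦
        (exp (-c * |x| ^ p) - exp (-b * x ^ 2)) * (exp (-a * x ^ 2) - exp (-a * r ^ 2)) := by
      have : Continuous fun x : ℝ ↦ |x| ^ p :=
        continuous_abs.rpow_const fun _ ↦ Or.inr (by linarith)
      fun_prop
    refine hcont.isOpen_support.measure_pos volume
      ⟨r / 2, (mul_pos (sub_pos.2 (exp_lt_exp.2 ?_)) (sub_pos.2 (exp_lt_exp.2 ?_))).ne'⟩
    · have := mul_lt_mul_of_pos_left (abs_rpow_lt_rpow_mul_sq (r := r) hp (half_pos hr).ne'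
        (by rw [abs_of_pos (half_pos hr)]; linarith)) hc
      rw [hbr]; linarith
    · nlinarith [mul_pos ha (mul_pos hr hr)]
  exact integral_mul_lt_integral_mul_of_sub_mul_sub_nonneg _ hf hg
    (hf.mul_bdd hw_cont.aestronglyMeasurable hw_le)
    (hg.mul_bdd hw_cont.aestronglyMeasurable hw_le)
    heq hsign hsupport

lemma sqrt_pi_div_pi_mul {v : ℝ} (hv : 0 < v) : √(π / (π * v)) = v ^ (-(1 : ℝ) / 2) := by
  rw [div_mul_cancel_left₀ pi_ne_zero, sqrt_eq_rpow, ← rpow_neg_one, ← rpow_mul hv.le]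
  norm_num

theorem stmt_17 (p : ℝ) (hp : 2 < p) (u : ℝ) (hu : 0 < u) :
    (∫ x : ℝ, Real.exp (-(2 * Real.Gamma (1 + 1 / p)) ^ p * u ^ (p / 2) * |x| ^ p
      - π * x ^ 2)) > (1 + u) ^ (-(1 : ℝ) / 2) := by
  set β := 2 * Gamma (1 + 1 / p)
  have hβ : 0 < β := mul_pos two_pos (Gamma_pos_of_pos (by positivity))
  have hc : 0 < β ^ p * u ^ (p / 2) := by positivity
  have hcpow : (β ^ p * u ^ (p / 2)) ^ (-1 / p) = β⁻¹ * u ^ (-(1 : ℝ) / 2) := by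
    rw [mul_rpow (by positivity) (by positivity), ← rpow_mul hβ.le, ← rpow_mul hu.le,
      ← rpow_neg_one]
    congr 2 <;> field_simp
  have heq :
      ∫ x : ℝ, exp (-(β ^ p * u ^ (p / 2)) * |x| ^ p) = ∫ x : ℝ, exp (-(π * u) * x ^ 2) := by
    rw [integral_exp_neg_mul_abs_rpow hc (by linarith), hcpow, integral_gaussian,
      sqrt_pi_div_pi_mul hu, add_comm (1 / p), ← mul_assoc, mul_inv_cancel₀ hβ.ne',
      one_mul]
  calc (1 + u) ^ (-(1 : ℝ) / 2) = ∫ x : ℝ, exp (-(π * u) * x ^ 2) * exp (-π * x ^ 2) := by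
        rw [integral_exp_neg_mul_sq_mul_exp_neg_mul_sq, ← mul_one_add,
          sqrt_pi_div_pi_mul (by linarith)]
    _ < ∫ x : ℝ, exp (-(β ^ p * u ^ (p / 2)) * |x| ^ p) * exp (-π * x ^ 2) :=
      integral_exp_neg_mul_sq_mul_lt_of_integral_eq pi_pos (by positivity) hc hp heq
    _ = ∫ x : ℝ, exp (-β ^ p * u ^ (p / 2) * |x| ^ p - π * x ^ 2) := by
      simp_rw [← exp_add]
      ring_nf
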